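/- Let Y be a digraph and H̄ a contravariant functor from the homotopy category of finite digraphs to Set. There is a bijection φ from the set Nat([−,Y], H̄(−)) of natural transformations to the inverse limit lim_α H̄(Y_α) over all finite subdigraphs Y_α of Y, given by φ(T) = (T_{Y_α}([i_α]))_α where i_α : Y_α ↪ Y are the inclusion maps. -/

import Mathlib

/-- A directed graph: a vertex type with a loopless edge relation. -/
structure DGraph where
  V : Type
  E : V → V → Prop
  loopless : ∀ v, ¬ E v v

/-- A digraph map: each edge is collapsed or preserved. -/
structure DMap (G H : DGraph) where
  toFun : G.V → H.V
  map_edge : ∀ {x y}, G.E x y → toFun x = toFun y ∨ H.E (toFun x) (toFun y)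

def DMap.id (G : DGraph) : DMap G G := ⟨fun x => x, fun e => Or.inr e⟩

def DMap.comp {G H K : DGraph} (g : DMap H K) (f : DMap G H) : DMap G K :=
  ⟨fun x => g.toFun (f.toFun x), fun e => by
    rcases f.map_edge e with h | h
    · exact Or.inl (congrArg g.toFun h)
    · exact g.map_edge h⟩

/-- The `n`-step line digraph with orientations given by `o`:
if `o i` then the edge between `i` and `i+1` goes `i → i+1`, else `i+1 → i`. -/
def lineD (n : ℕ) (o : ℕ → Bool) : DGraph where
  V := Fin (n+1)
  E i j := ((j:ℕ) = (i:ℕ)+1 ∧ o (i:ℕ) = true) ∨ ((i:ℕ) = (j:ℕ)+1 ∧ o (j:ℕ) = false)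
  loopless := by rintro v (⟨h,_⟩|⟨h,_⟩) <;> omega

/-- The box product of digraphs. -/
def boxProd (G H : DGraph) : DGraph where
  V := G.V × H.V
  E p q := (p.1 = q.1 ∧ H.E p.2 q.2) ∨ (G.E p.1 q.1 ∧ p.2 = q.2)
  loopless := by
    rintro ⟨a,b⟩ (⟨_,h⟩|⟨h,_⟩)
    · exact H.loopless _ h
    · exact G.loopless _ h

/-- Homotopy of digraph maps via a line-digraph parametrized family. -/
def Homotopic {G H : DGraph} (f g : DMap G H) : Prop :=
  ∃ (n : ℕ) (o : ℕ → Bool) (F : DMap (boxProd G (lineD n o)) H),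
    (∀ x, F.toFun (x, (0 : Fin (n+1))) = f.toFun x) ∧
    (∀ x, F.toFun (x, Fin.last n) = g.toFun x)

def DMap.const (G H : DGraph) (c : H.V) : DMap G H := ⟨fun _ => c, fun _ => Or.inl rfl⟩

/-- A digraph is contractible if its identity is homotopic to a constant map. -/
def Contractible (G : DGraph) : Prop :=
  ∃ c : G.V, Homotopic (DMap.id G) (DMap.const G G c)

/-- Homotopy equivalence of digraphs. -/
def HomotopyEquivalence {G H : DGraph} (u : DMap G H) (v : DMap H G) : Prop :=
  Homotopic (v.comp u) (DMap.id G) ∧ Homotopic (u.comp v) (DMap.id H)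

open CategoryTheory

/-- A subdigraph of a digraph, given by subsets of vertices and edges. -/
structure Subdigraph (Y : DGraph) where
  verts : Set Y.V
  edges : Y.V → Y.V → Prop
  edge_sub : ∀ {x y}, edges x y → Y.E x y
  edge_mem : ∀ {x y}, edges x y → x ∈ verts ∧ y ∈ verts

namespace Subdigraph
variable {Y : DGraph}

def le (A B : Subdigraph Y) : Prop :=
  A.verts ⊆ B.verts ∧ ∀ {x y}, A.edges x y → B.edges x y

def union (A B : Subdigraph Y) : Subdigraph Y where
  verts := A.verts ∪ B.verts
  edges x y := A.edges x y ∨ B.edges x y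
  edge_sub := by rintro x y (h|h) <;> [exact A.edge_sub h; exact B.edge_sub h]
  edge_mem := by
    rintro x y (h|h)
    · exact ⟨Or.inl (A.edge_mem h).1, Or.inl (A.edge_mem h).2⟩
    · exact ⟨Or.inr (B.edge_mem h).1, Or.inr (B.edge_mem h).2⟩

def inter (A B : Subdigraph Y) : Subdigraph Y where
  verts := A.verts ∩ B.verts
  edges x y := A.edges x y ∧ B.edges x y
  edge_sub h := A.edge_sub h.1
  edge_mem h := ⟨⟨(A.edge_mem h.1).1, (B.edge_mem h.2).1⟩, (A.edge_mem h.1).2, (B.edge_mem h.2).2⟩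

/-- The digraph determined by a subdigraph. -/
def toD (A : Subdigraph Y) : DGraph where
  V := {v // v ∈ A.verts}
  E x y := A.edges x.val y.val
  loopless v h := Y.loopless v.val (A.edge_sub h)

def inclDMap {A B : Subdigraph Y} (h : A.le B) : DMap A.toD B.toD :=
  ⟨fun v => ⟨v.val, h.1 v.prop⟩, fun e => Or.inr (h.2 e)⟩

/-- Inclusion of a subdigraph into the ambient digraph. -/
def inclY (A : Subdigraph Y) : DMap A.toD Y :=
  ⟨fun v => v.val, fun e => Or.inr (A.edge_sub e)⟩

theorem le_union_left (A B : Subdigraph Y) : A.le (A.union B) :=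
  ⟨fun _ h => Or.inl h, fun e => Or.inl e⟩
theorem le_union_right (A B : Subdigraph Y) : B.le (A.union B) :=
  ⟨fun _ h => Or.inr h, fun e => Or.inr e⟩
theorem inter_le_left (A B : Subdigraph Y) : (A.inter B).le A :=
  ⟨fun _ h => h.1, fun e => e.1⟩
theorem inter_le_right (A B : Subdigraph Y) : (A.inter B).le B :=
  ⟨fun _ h => h.2, fun e => e.2⟩

theorem finiteV {A : Subdigraph Y} (h : A.verts.Finite) : Finite A.toD.V :=
  h.to_subtype

theorem inter_verts_finite {A B : Subdigraph Y} (hA : A.verts.Finite) :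
    (A.inter B).verts.Finite := hA.subset Set.inter_subset_left

theorem union_verts_finite {A B : Subdigraph Y} (hA : A.verts.Finite)
    (hB : B.verts.Finite) : (A.union B).verts.Finite := hA.union hB
end Subdigraph

/-- Disjoint union (coproduct) of a family of digraphs. -/
def sigmaD {ι : Type} (G : ι → DGraph) : DGraph where
  V := Σ i, (G i).V
  E a b := ∃ h : a.1 = b.1, (G b.1).E (cast (congrArg (fun i => (G i).V) h) a.2) b.2
  loopless := by rintro ⟨i, x⟩ ⟨h, e⟩; exact (G i).loopless x e

def sigmaIncl {ι : Type} (G : ι → DGraph) (i : ι) : DMap (G i) (sigmaD G) :=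
  ⟨fun x => ⟨i, x⟩, fun e => Or.inr ⟨rfl, e⟩⟩

/-- Binary disjoint union of digraphs. -/
def sumD (G H : DGraph) : DGraph where
  V := Sum G.V H.V
  E a b :=
    match a, b with
    | Sum.inl x, Sum.inl y => G.E x y
    | Sum.inr x, Sum.inr y => H.E x y
    | _, _ => False
  loopless := by
    rintro (x|x) h
    · exact G.loopless x h
    · exact H.loopless x h

/-- A digraph Brown functor: a contravariant, homotopy-invariant, abelian-group valued
functor on finite digraphs satisfying the triviality, additivity and Mayer–Vietoris axioms. -/
structure BrownFunctor where
  obj : ∀ (G : DGraph), Finite G.V → AddCommGrpCat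
  map : ∀ {G H : DGraph} (hG : Finite G.V) (hH : Finite H.V),
    DMap G H → (obj H hH ⟶ obj G hG)
  map_id : ∀ (G : DGraph) (hG : Finite G.V), map hG hG (DMap.id G) = 𝟙 (obj G hG)
  map_comp : ∀ {G H K : DGraph} (hG : Finite G.V) (hH : Finite H.V) (hK : Finite K.V)
    (f : DMap G H) (g : DMap H K), map hG hK (g.comp f) = (map hH hK g) ≫ (map hG hH f)
  map_homotopic : ∀ {G H : DGraph} (hG : Finite G.V) (hH : Finite H.V)
    (f g : DMap G H), Homotopic f g → map hG hH f = map hG hH g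
  triviality : ∀ (G : DGraph) (hG : Finite G.V), Subsingleton G.V → Nonempty G.V →
    ∀ x : obj G hG, x = 0
  additivity : ∀ {ι : Type} [Finite ι] (Gf : ι → DGraph) (h : ∀ i, Finite (Gf i).V),
    Function.Bijective (fun (x : obj (sigmaD Gf) (by have := h; exact Finite.instSigma)) i =>
      map (h i) _ (sigmaIncl Gf i) x)
  mayer_vietoris : ∀ (Y : DGraph) (A B : Subdigraph Y)
    (hA : A.verts.Finite) (hB : B.verts.Finite)
    (a : obj A.toD (Subdigraph.finiteV hA)) (b : obj B.toD (Subdigraph.finiteV hB)),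
    map (Subdigraph.finiteV (Subdigraph.inter_verts_finite hA)) _
        (Subdigraph.inclDMap (Subdigraph.inter_le_left A B)) a =
    map (Subdigraph.finiteV (Subdigraph.inter_verts_finite hA)) _
        (Subdigraph.inclDMap (Subdigraph.inter_le_right A B)) b →
    ∃ c : obj (A.union B).toD (Subdigraph.finiteV (Subdigraph.union_verts_finite hA hB)),
      map _ _ (Subdigraph.inclDMap (Subdigraph.le_union_left A B)) c = a ∧
      map _ _ (Subdigraph.inclDMap (Subdigraph.le_union_right A B)) c = b

theorem DMap.ext {G H : DGraph} {u v : DMap G H} (h : u.toFun = v.toFun) : u = v := by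
  cases u; cases v; cases h; rfl

/-- The directed set of finite subdigraphs of a digraph. -/
def FinSub (G : DGraph) := {A : Subdigraph G // A.verts.Finite}

/-- The extension `Ĥ` of a Brown functor to arbitrary digraphs: the inverse limit over
all finite subdigraphs, realized as compatible families. -/
def hatObj (B : BrownFunctor) (G : DGraph) : Type :=
  {x : ∀ A : FinSub G, B.obj A.val.toD (Subdigraph.finiteV A.prop) //
    ∀ (A A' : FinSub G) (h : A.val.le A'.val),
      B.map _ _ (Subdigraph.inclDMap h) (x A') = x A}

/-- The image of a subdigraph under a digraph map. -/
def imageSub {G H : DGraph} (f : DMap G H) (A : Subdigraph G) : Subdigraph H where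
  verts := f.toFun '' A.verts
  edges h h' := h ≠ h' ∧ ∃ x y, A.edges x y ∧ f.toFun x = h ∧ f.toFun y = h'
  edge_sub := by
    rintro u v ⟨hne, x, y, e, rfl, rfl⟩
    rcases f.map_edge (A.edge_sub e) with h | h
    · exact absurd h hne
    · exact h
  edge_mem := by
    rintro u v ⟨hne, x, y, e, rfl, rfl⟩
    exact ⟨⟨x, (A.edge_mem e).1, rfl⟩, ⟨y, (A.edge_mem e).2, rfl⟩⟩

/-- Restriction of a digraph map to a subdigraph, with values in the image subdigraph. -/
def restrictMap {G H : DGraph} (f : DMap G H) (A : Subdigraph G) :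
    DMap A.toD (imageSub f A).toD where
  toFun v := ⟨f.toFun v.val, v.val, v.prop, rfl⟩
  map_edge := by
    rintro ⟨x, hx⟩ ⟨y, hy⟩ e
    by_cases h : f.toFun x = f.toFun y
    · exact Or.inl (Subtype.ext h)
    · exact Or.inr ⟨h, x, y, e, rfl, rfl⟩

def imageFin {G H : DGraph} (f : DMap G H) (A : FinSub G) : FinSub H :=
  ⟨imageSub f A.val, A.prop.image _⟩

theorem imageFin_mono {G H : DGraph} (f : DMap G H) {A A' : FinSub G}
    (h : A.val.le A'.val) : (imageFin f A).val.le (imageFin f A').val := by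
  constructor
  · exact Set.image_mono h.1
  · rintro x y ⟨hne, a, b, e, rfl, rfl⟩
    exact ⟨hne, a, b, h.2 e, rfl, rfl⟩

/-- The functorial action of the extension `Ĥ` on digraph maps. -/
def hatMap (B : BrownFunctor) {G H : DGraph} (f : DMap G H) :
    hatObj B H → hatObj B G := fun y =>
  ⟨fun A => B.map _ _ (restrictMap f A.val) (y.val (imageFin f A)), by
    intro A A' h
    have hcomm : (DMap.comp (restrictMap f A'.val) (Subdigraph.inclDMap h)) =
        (DMap.comp (Subdigraph.inclDMap (imageFin_mono f h)) (restrictMap f A.val)) := by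
      apply DMap.ext; funext v; rfl
    have h3 := y.prop (imageFin f A) (imageFin f A') (imageFin_mono f h)
    have h1 := congrArg (fun φ => φ (y.val (imageFin f A')))
      (B.map_comp (Subdigraph.finiteV A.prop) (Subdigraph.finiteV A'.prop)
        (Subdigraph.finiteV (imageFin f A').prop)
        (Subdigraph.inclDMap h) (restrictMap f A'.val))
    have h2 := congrArg (fun φ => φ (y.val (imageFin f A')))
      (B.map_comp (Subdigraph.finiteV A.prop) (Subdigraph.finiteV (imageFin f A).prop)
        (Subdigraph.finiteV (imageFin f A').prop)
        (restrictMap f A.val) (Subdigraph.inclDMap (imageFin_mono f h)))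
    beta_reduce
    rw [← h3]
    exact (h1.symm.trans (congrArg (fun g => B.map (Subdigraph.finiteV A.prop)
      (Subdigraph.finiteV (imageFin f A').prop) g (y.val (imageFin f A'))) hcomm)).trans h2⟩

/-- The set of homotopy classes of digraph maps `G → Y`. -/
def HomClasses (G Y : DGraph) := Quot (fun f g : DMap G Y => Homotopic f g)

/-- A contravariant, homotopy-invariant `Set`-valued functor on finite digraphs. -/
structure HSetFunctor where
  obj : ∀ (G : DGraph), Finite G.V → Type
  map : ∀ {G H : DGraph} (hG : Finite G.V) (hH : Finite H.V),
    DMap G H → obj H hH → obj G hG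
  map_id : ∀ (G : DGraph) (hG : Finite G.V) (x : obj G hG), map hG hG (DMap.id G) x = x
  map_comp : ∀ {G H K : DGraph} (hG : Finite G.V) (hH : Finite H.V) (hK : Finite K.V)
    (f : DMap G H) (g : DMap H K) (x : obj K hK),
    map hG hK (g.comp f) x = map hG hH f (map hH hK g x)
  map_homotopic : ∀ {G H : DGraph} (hG : Finite G.V) (hH : Finite H.V)
    (f g : DMap G H), Homotopic f g → ∀ x, map hG hH f x = map hG hH g x

/-- Natural transformations `[−,Y] ⟹ H̄(−)` on the homotopy category of finite digraphs. -/
def NatT (Y : DGraph) (F : HSetFunctor) :=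
  {T : ∀ (G : DGraph) (hG : Finite G.V), HomClasses G Y → F.obj G hG //
    ∀ (G H : DGraph) (hG : Finite G.V) (hH : Finite H.V) (f : DMap G H) (u : DMap H Y),
      T G hG (Quot.mk _ (u.comp f)) = F.map hG hH f (T H hH (Quot.mk _ u))}

/-- The full subdigraph on all vertices and edges. -/
def topSub (G : DGraph) : Subdigraph G where
  verts := Set.univ
  edges := G.E
  edge_sub := id
  edge_mem _ := ⟨trivial, trivial⟩

/-- The full image of a digraph map, as a subdigraph of the codomain. -/
def fullImg {G H : DGraph} (f : DMap G H) : Subdigraph H := imageSub f (topSub G)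

/-- The corestriction of a digraph map onto its full image. -/
def toImg {G H : DGraph} (f : DMap G H) : DMap G (fullImg f).toD where
  toFun x := ⟨f.toFun x, x, trivial, rfl⟩
  map_edge {x y} e := by
    by_cases h : f.toFun x = f.toFun y
    · exact Or.inl (Subtype.ext h)
    · exact Or.inr ⟨h, x, y, e, rfl, rfl⟩

def fullImgFin {G H : DGraph} (hG : Finite G.V) (f : DMap G H) : FinSub H :=
  ⟨fullImg f, by have := hG; exact Set.finite_univ.image _⟩

theorem incl_comp_toImg {G H : DGraph} (f : DMap G H) :
    (fullImg f).inclY.comp (toImg f) = f := DMap.ext rfl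

section Aux
variable {Y : DGraph} (F : HSetFunctor)

/-- The candidate value of the natural transformation on a map `u : G → Y`. -/
def natVal {G : DGraph} (hG : Finite G.V)
    (x : ∀ A : FinSub Y, F.obj A.val.toD (Subdigraph.finiteV A.prop))
    (u : DMap G Y) : F.obj G hG :=
  F.map hG (Subdigraph.finiteV (fullImgFin hG u).prop) (toImg u) (x (fullImgFin hG u))

theorem natVal_homotopic {G : DGraph} (hG : Finite G.V)
    (x : ∀ A : FinSub Y, F.obj A.val.toD (Subdigraph.finiteV A.prop))
    (hx : ∀ (A A' : FinSub Y) (h : A.val.le A'.val),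
      F.map _ _ (Subdigraph.inclDMap h) (x A') = x A)
    (u v : DMap G Y) (huv : Homotopic u v) :
    natVal F hG x u = natVal F hG x v := by
  obtain ⟨n, o, Ht, h0, h1⟩ := huv
  have hP : Finite (boxProd G (lineD n o)).V := by
    have := hG
    exact (inferInstance : Finite (G.V × Fin (n+1)))
  set C : FinSub Y := fullImgFin hP Ht with hC
  have le1 : (fullImgFin hG u).val.le C.val := by
    constructor
    · rintro w ⟨a, -, rfl⟩
      exact ⟨(a, (0 : Fin (n+1))), trivial, h0 a⟩
    · rintro w w' ⟨hne, a, b, e, rfl, rfl⟩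
      refine ⟨hne, (a, (0 : Fin (n+1))), (b, (0 : Fin (n+1))), Or.inr ⟨e, rfl⟩, h0 a, h0 b⟩
  have le2 : (fullImgFin hG v).val.le C.val := by
    constructor
    · rintro w ⟨a, -, rfl⟩
      exact ⟨(a, Fin.last n), trivial, h1 a⟩
    · rintro w w' ⟨hne, a, b, e, rfl, rfl⟩
      exact ⟨hne, (a, Fin.last n), (b, Fin.last n), Or.inr ⟨e, rfl⟩, h1 a, h1 b⟩
  have hhom : Homotopic ((Subdigraph.inclDMap le1).comp (toImg u))
      ((Subdigraph.inclDMap le2).comp (toImg v)) := by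
    refine ⟨n, o, ⟨fun p => ⟨Ht.toFun p, p, trivial, rfl⟩, ?_⟩, ?_, ?_⟩
    · intro p q e
      by_cases h : Ht.toFun p = Ht.toFun q
      · exact Or.inl (Subtype.ext h)
      · exact Or.inr ⟨h, p, q, e, rfl, rfl⟩
    · intro a; exact Subtype.ext (h0 a)
    · intro a; exact Subtype.ext (h1 a)
  have key := F.map_homotopic hG (Subdigraph.finiteV C.prop) _ _ hhom (x C)
  calc natVal F hG x u
      = F.map hG _ (toImg u)
          (F.map _ _ (Subdigraph.inclDMap le1) (x C)) :=
        (congrArg (F.map hG _ (toImg u)) (hx (fullImgFin hG u) C le1)).symm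
    _ = F.map hG _ ((Subdigraph.inclDMap le1).comp (toImg u)) (x C) :=
        (F.map_comp _ _ _ _ _ _).symm
    _ = F.map hG _ ((Subdigraph.inclDMap le2).comp (toImg v)) (x C) := key
    _ = F.map hG _ (toImg v)
          (F.map _ _ (Subdigraph.inclDMap le2) (x C)) :=
        F.map_comp _ _ _ _ _ _
    _ = natVal F hG x v := congrArg (F.map hG _ (toImg v)) (hx (fullImgFin hG v) C le2)

end Aux

/-- The map `φ : Nat([−,Y], H̄(−)) → lim_α H̄(Y_α)`,
`φ(T) = (T_{Y_α}([i_α]))_α` over all finite subdigraphs `Y_α ⊆ Y`, is a bijection: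
it is injective, and its image is exactly the set of compatible families. -/
theorem yoneda_inverse_limit (Y : DGraph) (F : HSetFunctor) :
    Function.Injective
      (fun (T : NatT Y F) (A : FinSub Y) =>
        T.val A.val.toD (Subdigraph.finiteV A.prop) (Quot.mk _ A.val.inclY)) ∧
    ∀ x : ∀ A : FinSub Y, F.obj A.val.toD (Subdigraph.finiteV A.prop),
      (∀ (A A' : FinSub Y) (h : A.val.le A'.val),
        F.map _ _ (Subdigraph.inclDMap h) (x A') = x A) →
      ∃ T : NatT Y F, ∀ A : FinSub Y,
        T.val A.val.toD (Subdigraph.finiteV A.prop) (Quot.mk _ A.val.inclY) = x A := by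
  have factor : ∀ (T : NatT Y F) (G : DGraph) (hG : Finite G.V) (u : DMap G Y),
      T.val G hG (Quot.mk _ u) =
        F.map hG (Subdigraph.finiteV (fullImgFin hG u).prop) (toImg u)
          (T.val (fullImgFin hG u).val.toD (Subdigraph.finiteV (fullImgFin hG u).prop)
            (Quot.mk _ (fullImgFin hG u).val.inclY)) := by
    intro T G hG u
    have := T.prop G (fullImgFin hG u).val.toD hG
      (Subdigraph.finiteV (fullImgFin hG u).prop) (toImg u) (fullImgFin hG u).val.inclY
    have hu : (fullImgFin hG u).val.inclY.comp (toImg u) = u := DMap.ext rfl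
    rwa [hu] at this
  constructor
  · intro T1 T2 heq
    apply Subtype.ext
    funext G hG q
    induction q using Quot.ind with
    | _ u =>
      rw [factor T1 G hG u, factor T2 G hG u]
      exact congrArg _ (congrFun heq (fullImgFin hG u))
  · intro x hx
    refine ⟨⟨fun G hG => Quot.lift (natVal F hG x)
      (fun u v h => natVal_homotopic F hG x hx u v h), ?_⟩, ?_⟩
    · intro G H hG hH f u
      show natVal F hG x (u.comp f) = F.map hG hH f (natVal F hH x u)
      have le : (fullImgFin hG (u.comp f)).val.le (fullImgFin hH u).val := by
        constructor
        · rintro w ⟨a, -, rfl⟩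
          exact ⟨f.toFun a, trivial, rfl⟩
        · rintro w w' ⟨hne, a, b, e, rfl, rfl⟩
          rcases f.map_edge e with h | h
          · exact absurd (congrArg u.toFun h) hne
          · exact ⟨hne, f.toFun a, f.toFun b, h, rfl, rfl⟩
      have hcomp : (Subdigraph.inclDMap le).comp (toImg (u.comp f)) =
          (toImg u).comp f := DMap.ext rfl
      calc natVal F hG x (u.comp f)
          = F.map hG _ (toImg (u.comp f))
              (F.map _ _ (Subdigraph.inclDMap le) (x (fullImgFin hH u))) :=
            (congrArg (F.map hG _ (toImg (u.comp f))) (hx _ _ le)).symm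
        _ = F.map hG _ ((Subdigraph.inclDMap le).comp (toImg (u.comp f)))
              (x (fullImgFin hH u)) := (F.map_comp _ _ _ _ _ _).symm
        _ = F.map hG _ ((toImg u).comp f) (x (fullImgFin hH u)) := by rw [hcomp]; rfl
        _ = F.map hG hH f (natVal F hH x u) := F.map_comp _ _ _ _ _ _
    · intro A
      show natVal F (Subdigraph.finiteV A.prop) x A.val.inclY = x A
      set hA := Subdigraph.finiteV A.prop
      have le : (fullImgFin hA A.val.inclY).val.le A.val := by
        constructor
        · rintro w ⟨a, -, rfl⟩
          exact a.prop
        · rintro w w' ⟨hne, a, b, e, rfl, rfl⟩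
          exact e
      have hcomp : (Subdigraph.inclDMap le).comp (toImg A.val.inclY) =
          DMap.id A.val.toD := DMap.ext rfl
      calc natVal F hA x A.val.inclY
          = F.map hA _ (toImg A.val.inclY)
              (F.map _ _ (Subdigraph.inclDMap le) (x A)) :=
            (congrArg (F.map hA _ (toImg A.val.inclY)) (hx _ _ le)).symm
        _ = F.map hA _ ((Subdigraph.inclDMap le).comp (toImg A.val.inclY)) (x A) :=
            (F.map_comp _ _ _ _ _ _).symm
        _ = F.map hA hA (DMap.id A.val.toD) (x A) := by rw [hcomp]
        _ = x A := F.map_id _ _ _
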